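/- Let v ∈ ℂ^p, w ∈ ℂ^q, and let K = [[A, B],[C, D]] be a (p+q)×(p+q) complex matrix (with A of size p×p, B of size p×q, C of size q×p, D of size q×q) satisfying operator norm ‖K‖ ≤ 1. Then the (p+q+1)×(p+q+1) matrix M with block structure M = [[0, vᵀ, 0],[0, A, B],[w, C, D]] satisfies |det M| ≤ √e · ‖v‖ · ‖w‖ · ‖B‖. -/

import Mathlib

/-!
Write `x = (x₀, x_p, x_q)`, let `T` be the operator of `M` and `λᵢ` the eigenvalues of `T⋆T`,
so that `‖det M‖² = ∏ λᵢ`. Suppose `‖v‖, ‖w‖ ≤ t`. Then `‖T‖ ≤ 1 + t`, so every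
`λᵢ ≤ (1 + t)²`. On the codimension-two subspace `x₀ = 0, vᵀ x_p = 0` the matrix `M` acts as the
contraction `K`, so at most two `λᵢ` exceed `1`. Counting dimensions, some `x ≠ 0` has `x_p = 0`
and `(M x)_q = 0`, hence `M x = (0, B x_q, 0)` and some `λᵢ ≤ ‖B‖²`. Together,
`‖det M‖ ≤ ‖B‖ (1 + t)²`. Rescaling `v` and `w` to norm `t` and letting `t → ∞` gives
`‖det M‖ ≤ ‖v‖ ‖w‖ ‖B‖`, and `√e ≥ 1`.
-/

open Matrix Module InnerProductSpace Finset WithLp Filter Topology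

theorem prod_le_mul_pow_of_card_one_lt_le {ι : Type*} [Fintype ι] {f : ι → ℝ} {A B : ℝ} {k : ℕ}
    (hf : ∀ i, 0 ≤ f i) (hA : 1 ≤ A) (hfA : ∀ i, f i ≤ A) (hk : #{i | 1 < f i} ≤ k) {i₀ : ι}
    (hi₀ : f i₀ ≤ B) : ∏ i, f i ≤ B * A ^ k := by
  classical
  have hrest : ∏ i ∈ univ.erase i₀, f i ≤ A ^ k :=
    calc ∏ i ∈ univ.erase i₀, f i ≤ ∏ i ∈ univ.erase i₀, if 1 < f i then A else 1 :=
          prod_le_prod (fun i _ => hf i) fun i _ => by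
            split_ifs with h <;> [exact hfA i; exact not_lt.mp h]
      _ = A ^ #{i ∈ univ.erase i₀ | 1 < f i} := by
          rw [prod_ite, prod_const, prod_const, one_pow, mul_one]
      _ ≤ A ^ k := pow_le_pow_right₀ hA <|
          (card_le_card <| filter_subset_filter _ (erase_subset _ _)).trans hk
  rw [← mul_prod_erase univ f (mem_univ i₀)]
  exact mul_le_mul hi₀ hrest (prod_nonneg fun i _ => hf i) ((hf i₀).trans hi₀)

namespace LinearMap

variable {𝕜 E F : Type*} [RCLike 𝕜]
  [NormedAddCommGroup E] [InnerProductSpace 𝕜 E] [FiniteDimensional 𝕜 E]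
  [NormedAddCommGroup F] [InnerProductSpace 𝕜 F] [FiniteDimensional 𝕜 F]

theorem norm_sq_apply_eq_sum_eigenvalues_mul (T : E →ₗ[𝕜] F) (x : E) :
    ‖T x‖ ^ 2 = ∑ i, T.isSymmetric_adjoint_comp_self.eigenvalues rfl i *
      ‖⟪T.isSymmetric_adjoint_comp_self.eigenvectorBasis rfl i, x⟫_𝕜‖ ^ 2 := by
  set hH := T.isSymmetric_adjoint_comp_self
  set e := hH.eigenvectorBasis rfl
  have hterm (i) : ⟪x, e i⟫_𝕜 * ⟪e i, (adjoint T ∘ₗ T) x⟫_𝕜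
      = (hH.eigenvalues rfl i : 𝕜) * (‖⟪e i, x⟫_𝕜‖ ^ 2 : ℝ) := by
    rw [← hH, hH.apply_eigenvectorBasis, inner_smul_left, RCLike.conj_ofReal, ← inner_conj_symm x,
      RCLike.ofReal_pow, ← RCLike.conj_mul]
    ring
  have h : (‖T x‖ ^ 2 : 𝕜) = ⟪x, (adjoint T ∘ₗ T) x⟫_𝕜 := by
    rw [comp_apply, adjoint_inner_right, inner_self_eq_norm_sq_to_K]
  have hsum : (‖T x‖ ^ 2 : 𝕜) = ((∑ i, hH.eigenvalues rfl i * ‖⟪e i, x⟫_𝕜‖ ^ 2 : ℝ) : 𝕜) := by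
    rw [h, ← e.sum_inner_mul_inner, RCLike.ofReal_sum]
    exact Finset.sum_congr rfl fun i _ => by rw [hterm, RCLike.ofReal_mul]
  exact_mod_cast hsum

theorem eigenvalues_adjoint_comp_self_le_sq (T : E →ₗ[𝕜] F) {a : ℝ} (hT : ∀ x, ‖T x‖ ≤ a * ‖x‖)
    (i : Fin (finrank 𝕜 E)) : T.isSymmetric_adjoint_comp_self.eigenvalues rfl i ≤ a ^ 2 := by
  set hH := T.isSymmetric_adjoint_comp_self
  set e := hH.eigenvectorBasis rfl
  have h : (‖T (e i)‖ ^ 2 : 𝕜) = hH.eigenvalues rfl i := by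
    rw [← inner_self_eq_norm_sq_to_K, ← adjoint_inner_right, ← comp_apply,
      hH.apply_eigenvectorBasis, inner_smul_right, inner_self_eq_norm_sq_to_K, e.norm_eq_one]
    simp
  have h' : ‖T (e i)‖ ^ 2 = hH.eigenvalues rfl i := by exact_mod_cast h
  simpa [← h', e.norm_eq_one] using pow_le_pow_left₀ (norm_nonneg _) (hT (e i)) 2

theorem mul_norm_sq_lt_norm_apply_sq (T : E →ₗ[𝕜] F) {c : ℝ} {x : E} (hx : x ≠ 0)
    (hc : ∀ i, ⟪T.isSymmetric_adjoint_comp_self.eigenvectorBasis rfl i, x⟫_𝕜 ≠ 0 →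
      c < T.isSymmetric_adjoint_comp_self.eigenvalues rfl i) :
    c * ‖x‖ ^ 2 < ‖T x‖ ^ 2 := by
  rw [norm_sq_apply_eq_sum_eigenvalues_mul]
  set e := T.isSymmetric_adjoint_comp_self.eigenvectorBasis rfl
  obtain ⟨j, hj⟩ : ∃ j, ⟪e j, x⟫_𝕜 ≠ 0 := by
    by_contra! h
    have hx0 := e.sum_sq_norm_inner_right x
    simp [h] at hx0
    exact hx (norm_eq_zero.mp (pow_eq_zero_iff two_ne_zero |>.mp hx0.symm))
  rw [← e.sum_sq_norm_inner_right x, Finset.mul_sum]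
  refine Finset.sum_lt_sum (fun i _ => ?_) ⟨j, Finset.mem_univ j, ?_⟩
  · by_cases hi : ⟪e i, x⟫_𝕜 = 0
    · simp [hi]
    · exact mul_le_mul_of_nonneg_right (hc i hi).le (by positivity)
  · exact mul_lt_mul_of_pos_right (hc j hj) (by positivity)

theorem exists_eigenvalues_adjoint_comp_self_le_sq (T : E →ₗ[𝕜] F) {b : ℝ} {x : E} (hx : x ≠ 0)
    (hTx : ‖T x‖ ≤ b * ‖x‖) : ∃ i, T.isSymmetric_adjoint_comp_self.eigenvalues rfl i ≤ b ^ 2 := by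
  by_contra! h
  have := T.mul_norm_sq_lt_norm_apply_sq hx fun i _ => h i
  nlinarith [pow_le_pow_left₀ (norm_nonneg _) hTx 2]

theorem card_eigenvalues_adjoint_comp_self_gt_sq_le {G : Type*} [AddCommGroup G] [Module 𝕜 G]
    [FiniteDimensional 𝕜 G] (T : E →ₗ[𝕜] F) (ψ : E →ₗ[𝕜] G) {c : ℝ}
    (hψ : ∀ x, ψ x = 0 → ‖T x‖ ≤ c * ‖x‖) :
    #{i | c ^ 2 < T.isSymmetric_adjoint_comp_self.eigenvalues rfl i} ≤ finrank 𝕜 G := by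
  set e := T.isSymmetric_adjoint_comp_self.eigenvectorBasis rfl
  set S : Finset (Fin (finrank 𝕜 E)) :=
    {i | c ^ 2 < T.isSymmetric_adjoint_comp_self.eigenvalues rfl i}
  by_contra! hS
  -- more eigenvectors with `c ^ 2 < λᵢ` than `finrank 𝕜 G` span a vector in `ker ψ`
  let φ := Fintype.linearCombination 𝕜 fun i : S => e i
  have hφ : Function.Injective φ := (e.orthonormal.linearIndependent.comp _
    Subtype.val_injective).fintypeLinearCombination_injective
  obtain ⟨d, hd, hd0⟩ := Submodule.exists_mem_ne_zero_of_ne_bot <|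
    ker_ne_bot_of_finrank_lt (f := ψ ∘ₗ φ) (by rwa [finrank_fintype_fun_eq_card, Fintype.card_coe])
  have hsupp (j) (hj : ⟪e j, φ d⟫_𝕜 ≠ 0) :
      c ^ 2 < T.isSymmetric_adjoint_comp_self.eigenvalues rfl j := by
    by_contra hjS
    apply hj
    rw [Fintype.linearCombination_apply, inner_sum]
    refine Finset.sum_eq_zero fun i _ => ?_
    have hij : j ≠ i := by rintro rfl; exact hjS (Finset.mem_filter.mp i.2).2
    rw [inner_smul_right, e.orthonormal.2 hij, mul_zero]
  have := T.mul_norm_sq_lt_norm_apply_sq (hφ.ne hd0 |>.trans_eq φ.map_zero) hsupp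
  nlinarith [pow_le_pow_left₀ (norm_nonneg _) (hψ _ hd) 2]

theorem norm_det_sq_eq_prod_eigenvalues_adjoint_comp_self (T : E →ₗ[𝕜] E) :
    ‖T.det‖ ^ 2 = ∏ i, T.isSymmetric_adjoint_comp_self.eigenvalues rfl i := by
  have h := T.normDet_sq
  rw [T.isSymmetric_adjoint_comp_self.det_eq_prod_eigenvalues rfl, normDet_eq_norm_det] at h
  exact_mod_cast h

theorem norm_det_le_mul_pow_finrank {G : Type*} [AddCommGroup G] [Module 𝕜 G]
    [FiniteDimensional 𝕜 G] (T : E →ₗ[𝕜] E) (ψ : E →ₗ[𝕜] G) {a b : ℝ} (ha : 1 ≤ a)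
    (hT : ∀ x, ‖T x‖ ≤ a * ‖x‖) (hψ : ∀ x, ψ x = 0 → ‖T x‖ ≤ ‖x‖) {x₀ : E} (hx₀ : x₀ ≠ 0)
    (hTx₀ : ‖T x₀‖ ≤ b * ‖x₀‖) : ‖T.det‖ ≤ b * a ^ finrank 𝕜 G := by
  have hb : 0 ≤ b := nonneg_of_mul_nonneg_left ((norm_nonneg _).trans hTx₀) (norm_pos_iff.mpr hx₀)
  obtain ⟨i₀, hi₀⟩ := T.exists_eigenvalues_adjoint_comp_self_le_sq hx₀ hTx₀
  have hcard := T.card_eigenvalues_adjoint_comp_self_gt_sq_le ψ (c := 1) fun x hx =>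
    (hψ x hx).trans_eq (one_mul _).symm
  rw [one_pow] at hcard
  have hprod := prod_le_mul_pow_of_card_one_lt_le
    (T.isPositive_adjoint_comp_self.nonneg_eigenvalues rfl) (one_le_pow₀ ha)
    (T.eigenvalues_adjoint_comp_self_le_sq hT) hcard hi₀
  rw [← norm_det_sq_eq_prod_eigenvalues_adjoint_comp_self, ← pow_mul, mul_comm 2, pow_mul,
    ← mul_pow] at hprod
  exact (pow_le_pow_iff_left₀ (norm_nonneg _) (by positivity) two_ne_zero).mp hprod

end LinearMap

namespace EuclideanSpace

variable {𝕜 ι α β : Type*} [RCLike 𝕜] [Fintype ι] [Fintype α] [Fintype β]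

theorem norm_sq_eq_add_inl_inr (x : EuclideanSpace 𝕜 (α ⊕ β)) :
    ‖x‖ ^ 2 = ‖toLp 2 (ofLp x ∘ Sum.inl)‖ ^ 2 + ‖toLp 2 (ofLp x ∘ Sum.inr)‖ ^ 2 := by
  simp [norm_sq_eq, Fintype.sum_sum_type]

theorem norm_toLp_comp_inr_le (x : EuclideanSpace 𝕜 (α ⊕ β)) :
    ‖toLp 2 (ofLp x ∘ Sum.inr)‖ ≤ ‖x‖ := by
  rw [← sq_le_sq₀ (norm_nonneg _) (norm_nonneg _), norm_sq_eq_add_inl_inr x]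
  exact le_add_of_nonneg_left (sq_nonneg _)

theorem norm_sq_eq_unit_sum_sum (x : EuclideanSpace 𝕜 (Unit ⊕ (α ⊕ β))) :
    ‖x‖ ^ 2 = ‖x (.inl ())‖ ^ 2 + ‖toLp 2 fun a => x (.inr (.inl a))‖ ^ 2
      + ‖toLp 2 fun b => x (.inr (.inr b))‖ ^ 2 := by
  simp [norm_sq_eq, Fintype.sum_sum_type, add_assoc]

theorem norm_sum_mul_le (x y : EuclideanSpace 𝕜 ι) : ‖∑ i, x i * y i‖ ≤ ‖x‖ * ‖y‖ := by
  simp only [norm_eq]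
  calc ‖∑ i, x i * y i‖ ≤ ∑ i, ‖x i‖ * ‖y i‖ := (norm_sum_le _ _).trans_eq (by simp)
    _ ≤ _ := Real.sum_mul_le_sqrt_mul_sqrt _ _ _

end EuclideanSpace

namespace Matrix

variable {𝕜 m n : Type*} [RCLike 𝕜]

theorem det_toEuclideanLin [Fintype n] [DecidableEq n] (M : Matrix n n 𝕜) :
    LinearMap.det (toEuclideanLin M) = M.det := by
  rw [toEuclideanLin_eq_toLin_orthonormal, LinearMap.det_toLin]

theorem norm_toEuclideanLin_fromBlocks_zero_zero_zero_apply_le [Fintype m] [Fintype n]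
    [DecidableEq m] [DecidableEq n] (K : Matrix n n 𝕜) (x : EuclideanSpace 𝕜 (m ⊕ n)) :
    ‖toEuclideanLin (fromBlocks (0 : Matrix m m 𝕜) 0 0 K) x‖
      ≤ ‖toEuclideanCLM (𝕜 := 𝕜) K‖ * ‖x‖ := by
  set y := toEuclideanLin (fromBlocks (0 : Matrix m m 𝕜) 0 0 K) x
  have hy_inl : ofLp y ∘ Sum.inl = 0 := by ext; simp [y, fromBlocks_mulVec]
  have hy_inr :
      ofLp y ∘ Sum.inr = ofLp (toEuclideanCLM (𝕜 := 𝕜) K (toLp 2 (ofLp x ∘ Sum.inr))) := by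
    ext; simp [y, fromBlocks_mulVec]
  have hy : ‖y‖ = ‖toEuclideanCLM (𝕜 := 𝕜) K (toLp 2 (ofLp x ∘ Sum.inr))‖ := by
    rw [← sq_eq_sq₀ (norm_nonneg _) (norm_nonneg _), EuclideanSpace.norm_sq_eq_add_inl_inr,
      hy_inl, hy_inr]
    simp
  rw [hy]
  exact (ContinuousLinearMap.le_opNorm _ _).trans
    (mul_le_mul_of_nonneg_left (EuclideanSpace.norm_toLp_comp_inr_le x) (norm_nonneg _))

/-- With `K = fromBlocks A B C D` this is `[[0, vᵀ, 0], [0, A, B], [w, C, D]]`. -/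
def bordered (v : EuclideanSpace 𝕜 m) (w : EuclideanSpace 𝕜 n) (K : Matrix (m ⊕ n) (m ⊕ n) 𝕜) :
    Matrix (Unit ⊕ (m ⊕ n)) (Unit ⊕ (m ⊕ n)) 𝕜 :=
  fromBlocks 0 (of fun _ j => Sum.elim (fun i => v i) (fun _ => 0) j)
    (of fun i _ => Sum.elim (fun _ => 0) (fun j => w j) i) K

section Bordered

variable (v : EuclideanSpace 𝕜 m) (w : EuclideanSpace 𝕜 n) (K : Matrix (m ⊕ n) (m ⊕ n) 𝕜)

theorem bordered_eq_add :
    bordered v w K = bordered v w 0 + fromBlocks (0 : Matrix Unit Unit 𝕜) 0 0 K := by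
  ext (_ | _ | _) (_ | _ | _) <;> simp [bordered]

variable [Fintype m] [Fintype n] [DecidableEq m] [DecidableEq n]

theorem bordered_smul_smul (c d : 𝕜) :
    bordered (c • v) (d • w) K = diagonal (Sum.elim (fun _ => c) 1) * bordered v w K *
      diagonal (Sum.elim (fun _ => d) 1) := by
  ext (_ | _ | _) (_ | _ | _) <;> simp [bordered, mul_comm]

theorem det_bordered_smul_smul (c d : 𝕜) :
    (bordered (c • v) (d • w) K).det = c * d * (bordered v w K).det := by
  rw [bordered_smul_smul, det_mul, det_mul, det_diagonal, det_diagonal]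
  simp [Fintype.prod_sum_type]
  ring

theorem norm_sq_toEuclideanLin_bordered_zero_apply (x : EuclideanSpace 𝕜 (Unit ⊕ (m ⊕ n))) :
    ‖toEuclideanLin (bordered v w 0) x‖ ^ 2
      = ‖∑ i, v i * x (.inr (.inl i))‖ ^ 2 + ‖x (.inl ())‖ ^ 2 * ‖w‖ ^ 2 := by
  simp [EuclideanSpace.norm_sq_eq, Fintype.sum_sum_type, bordered, mulVec, dotProduct, norm_mul,
    mul_pow, Finset.mul_sum, mul_comm]

theorem norm_toEuclideanLin_bordered_zero_apply_le {t : ℝ} (hv : ‖v‖ ≤ t) (hw : ‖w‖ ≤ t)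
    (x : EuclideanSpace 𝕜 (Unit ⊕ (m ⊕ n))) : ‖toEuclideanLin (bordered v w 0) x‖ ≤ t * ‖x‖ := by
  have ht : 0 ≤ t := (norm_nonneg _).trans hv
  have hcs := EuclideanSpace.norm_sum_mul_le v (toLp 2 fun i => x (.inr (.inl i)))
  rw [← sq_le_sq₀ (norm_nonneg _) (by positivity), norm_sq_toEuclideanLin_bordered_zero_apply,
    mul_pow, EuclideanSpace.norm_sq_eq_unit_sum_sum x]
  have h1 := pow_le_pow_left₀ (norm_nonneg _)
    (hcs.trans (mul_le_mul_of_nonneg_right hv (norm_nonneg _))) 2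
  have h2 := pow_le_pow_left₀ (norm_nonneg _) hw 2
  rw [mul_pow] at h1
  nlinarith [sq_nonneg ‖x (.inl ())‖, sq_nonneg ‖toLp 2 fun j => x (.inr (.inr j))‖]

theorem toEuclideanLin_bordered_zero_apply_eq_zero {x : EuclideanSpace 𝕜 (Unit ⊕ (m ⊕ n))}
    (hx : x (.inl ()) = 0) (hvx : toEuclideanLin (bordered v w 0) x (.inl ()) = 0) :
    toEuclideanLin (bordered v w 0) x = 0 := by
  ext (_ | _ | _)
  · exact hvx
  all_goals simp [bordered, mulVec, dotProduct, Fintype.sum_sum_type, hx]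

theorem norm_toEuclideanLin_bordered_apply_le {t : ℝ} (hv : ‖v‖ ≤ t) (hw : ‖w‖ ≤ t)
    (x : EuclideanSpace 𝕜 (Unit ⊕ (m ⊕ n))) :
    ‖toEuclideanLin (bordered v w K) x‖ ≤ (t + ‖toEuclideanCLM (𝕜 := 𝕜) K‖) * ‖x‖ := by
  rw [bordered_eq_add, map_add, LinearMap.add_apply, add_mul]
  exact (norm_add_le _ _).trans <| add_le_add
    (norm_toEuclideanLin_bordered_zero_apply_le v w hv hw x)
    (norm_toEuclideanLin_fromBlocks_zero_zero_zero_apply_le K x)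

theorem norm_toEuclideanLin_bordered_apply_le_of_eq_zero {x : EuclideanSpace 𝕜 (Unit ⊕ (m ⊕ n))}
    (hx : x (.inl ()) = 0) (hvx : toEuclideanLin (bordered v w 0) x (.inl ()) = 0) :
    ‖toEuclideanLin (bordered v w K) x‖ ≤ ‖toEuclideanCLM (𝕜 := 𝕜) K‖ * ‖x‖ := by
  rw [bordered_eq_add, map_add, LinearMap.add_apply,
    toEuclideanLin_bordered_zero_apply_eq_zero v w hx hvx, zero_add]
  exact norm_toEuclideanLin_fromBlocks_zero_zero_zero_apply_le K x

theorem exists_ne_zero_norm_toEuclideanLin_bordered_fromBlocks_apply_le (A : Matrix m m 𝕜)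
    (B : Matrix m n 𝕜) (C : Matrix n m 𝕜) (D : Matrix n n 𝕜) :
    ∃ x ≠ 0, ‖toEuclideanLin (bordered v w (fromBlocks A B C D)) x‖
      ≤ ‖LinearMap.toContinuousLinearMap (toEuclideanLin B)‖ * ‖x‖ := by
  set T := toEuclideanLin (bordered v w (fromBlocks A B C D))
  let π (k : Unit ⊕ (m ⊕ n)) : EuclideanSpace 𝕜 (Unit ⊕ (m ⊕ n)) →ₗ[𝕜] 𝕜 :=
    EuclideanSpace.proj (𝕜 := 𝕜) k
  -- `ψ x = 0` says `x_m = 0` and `(T x)_n = 0`: fewer equations than coordinates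
  let ψ := (LinearMap.pi fun i => π (.inr (.inl i))).prod
    (LinearMap.pi fun j => π (.inr (.inr j)) ∘ₗ T)
  obtain ⟨x, hx, hx0⟩ := Submodule.exists_mem_ne_zero_of_ne_bot <|
    LinearMap.ker_ne_bot_of_finrank_lt (f := ψ) (by simp [Fintype.card_sum])
  have hxm (i : m) : x (.inr (.inl i)) = 0 := congr_fun (congr_arg Prod.fst hx) i
  have hTxn (j : n) : T x (.inr (.inr j)) = 0 := congr_fun (congr_arg Prod.snd hx) j
  set z : EuclideanSpace 𝕜 n := toLp 2 fun j => x (.inr (.inr j))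
  have hTx : ‖T x‖ = ‖toEuclideanLin B z‖ := by
    rw [← sq_eq_sq₀ (norm_nonneg _) (norm_nonneg _), EuclideanSpace.norm_sq_eq_unit_sum_sum (T x)]
    simp only [hTxn]
    simp [T, z, bordered, mulVec, dotProduct, Fintype.sum_sum_type, hxm, EuclideanSpace.norm_eq]
  refine ⟨x, hx0, ?_⟩
  have hz : ‖z‖ ≤ ‖x‖ := by
    rw [← sq_le_sq₀ (norm_nonneg _) (norm_nonneg _), EuclideanSpace.norm_sq_eq_unit_sum_sum x]
    nlinarith [sq_nonneg ‖x (.inl ())‖, sq_nonneg ‖toLp 2 fun i => x (.inr (.inl i))‖]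
  rw [hTx]
  exact ((LinearMap.toContinuousLinearMap (toEuclideanLin B)).le_opNorm z).trans
    (mul_le_mul_of_nonneg_left hz (norm_nonneg _))

end Bordered

section Determinant

variable [Fintype m] [Fintype n] [DecidableEq m] [DecidableEq n]
  (v : EuclideanSpace 𝕜 m) (w : EuclideanSpace 𝕜 n) {A : Matrix m m 𝕜} {B : Matrix m n 𝕜}
  {C : Matrix n m 𝕜} {D : Matrix n n 𝕜}

theorem norm_det_bordered_fromBlocks_le
    (hK : ‖toEuclideanCLM (𝕜 := 𝕜) (fromBlocks A B C D)‖ ≤ 1) {t : ℝ} (hv : ‖v‖ ≤ t)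
    (hw : ‖w‖ ≤ t) :
    ‖(bordered v w (fromBlocks A B C D)).det‖
      ≤ ‖LinearMap.toContinuousLinearMap (toEuclideanLin B)‖ * (1 + t) ^ 2 := by
  have ht : 0 ≤ t := (norm_nonneg _).trans hv
  let π : EuclideanSpace 𝕜 (Unit ⊕ (m ⊕ n)) →ₗ[𝕜] 𝕜 :=
    EuclideanSpace.proj (𝕜 := 𝕜) (Sum.inl () : Unit ⊕ (m ⊕ n))
  obtain ⟨x₀, hx₀, hTx₀⟩ :=
    exists_ne_zero_norm_toEuclideanLin_bordered_fromBlocks_apply_le v w A B C D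
  -- the kernel of `π.prod (π ∘ₗ _)` is `{x₀ = 0, vᵀ x_m = 0}`, where `M` acts as `K`
  have hdet := LinearMap.norm_det_le_mul_pow_finrank
    (toEuclideanLin (bordered v w (fromBlocks A B C D)))
    (π.prod (π ∘ₗ toEuclideanLin (bordered v w 0))) (a := 1 + t) (by linarith)
    (fun x => (norm_toEuclideanLin_bordered_apply_le v w _ hv hw x).trans
      (mul_le_mul_of_nonneg_right (by linarith) (norm_nonneg _)))
    (fun x hx => (norm_toEuclideanLin_bordered_apply_le_of_eq_zero v w _ (congr_arg Prod.fst hx)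
      (congr_arg Prod.snd hx)).trans (mul_le_of_le_one_left (norm_nonneg _) hK))
    hx₀ hTx₀
  rwa [det_toEuclideanLin, finrank_prod, finrank_self] at hdet

theorem det_bordered_zero_left (K : Matrix (m ⊕ n) (m ⊕ n) 𝕜) :
    (bordered 0 w K).det = 0 := by
  simpa using det_bordered_smul_smul (0 : EuclideanSpace 𝕜 m) w K 0 1

theorem det_bordered_zero_right (K : Matrix (m ⊕ n) (m ⊕ n) 𝕜) :
    (bordered v 0 K).det = 0 := by
  simpa using det_bordered_smul_smul v (0 : EuclideanSpace 𝕜 n) K 1 0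

theorem norm_det_bordered_fromBlocks_le_mul
    (hK : ‖toEuclideanCLM (𝕜 := 𝕜) (fromBlocks A B C D)‖ ≤ 1) :
    ‖(bordered v w (fromBlocks A B C D)).det‖
      ≤ ‖v‖ * ‖w‖ * ‖LinearMap.toContinuousLinearMap (toEuclideanLin B)‖ := by
  set β := ‖LinearMap.toContinuousLinearMap (toEuclideanLin B)‖ with hβ
  rcases eq_or_ne v 0 with rfl | hv
  · simp [det_bordered_zero_left]
  rcases eq_or_ne w 0 with rfl | hw
  · simp [det_bordered_zero_right]
  have hv' := norm_pos_iff.mpr hv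
  have hw' := norm_pos_iff.mpr hw
  have hbound (t : ℝ) (ht : 0 < t) :
      ‖(bordered v w (fromBlocks A B C D)).det‖ ≤ ‖v‖ * ‖w‖ * β * (1 + t⁻¹) ^ 2 := by
    have h := norm_det_bordered_fromBlocks_le (((t / ‖v‖ : ℝ) : 𝕜) • v) (((t / ‖w‖ : ℝ) : 𝕜) • w)
      hK (t := t) (by simp [norm_smul, abs_of_pos ht, hv'.ne'])
      (by simp [norm_smul, abs_of_pos ht, hw'.ne'])
    rw [det_bordered_smul_smul, norm_mul, norm_mul, RCLike.norm_ofReal, RCLike.norm_ofReal,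
      abs_of_pos (by positivity), abs_of_pos (by positivity), ← le_div_iff₀' (by positivity)] at h
    exact h.trans_eq (by rw [hβ]; field_simp; ring)
  have hlim :
      Tendsto (fun t : ℝ => ‖v‖ * ‖w‖ * β * (1 + t⁻¹) ^ 2) atTop (𝓝 (‖v‖ * ‖w‖ * β)) := by
    simpa using ((tendsto_inv_atTop_zero.const_add 1).pow 2).const_mul (‖v‖ * ‖w‖ * β)
  exact ge_of_tendsto hlim ((eventually_gt_atTop 0).mono hbound)

end Determinant

end Matrix

/-- Determinant bound for a bordered block matrix. If
K = [[A,B],[C,D]] has operator norm at most 1, and M is the matrix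
[[0, vᵀ, 0],[0, A, B],[w, C, D]], then |det M| ≤ √e ‖v‖ ‖w‖ ‖B‖. -/
theorem det_bordered_block_bound {p q : ℕ}
    (v : EuclideanSpace ℂ (Fin p)) (w : EuclideanSpace ℂ (Fin q))
    (A : Matrix (Fin p) (Fin p) ℂ) (B : Matrix (Fin p) (Fin q) ℂ)
    (C : Matrix (Fin q) (Fin p) ℂ) (D : Matrix (Fin q) (Fin q) ℂ)
    (hK : ‖Matrix.toEuclideanCLM (𝕜 := ℂ) (Matrix.fromBlocks A B C D)‖ ≤ 1) :
    ‖(Matrix.det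
        (Matrix.fromBlocks (0 : Matrix Unit Unit ℂ)
          (Matrix.of fun (_ : Unit) (j : Fin p ⊕ Fin q) =>
            Sum.elim (fun i => v i) (fun _ => (0:ℂ)) j)
          (Matrix.of fun (i : Fin p ⊕ Fin q) (_ : Unit) =>
            Sum.elim (fun _ => (0:ℂ)) (fun j => w j) i)
          (Matrix.fromBlocks A B C D)))‖
      ≤ Real.sqrt (Real.exp 1) * ‖v‖ * ‖w‖ *
          ‖LinearMap.toContinuousLinearMap (Matrix.toEuclideanLin B)‖ := by
  have hsqrt_e : 1 ≤ Real.sqrt (Real.exp 1) := Real.one_le_sqrt.mpr (Real.one_le_exp zero_le_one)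
  calc ‖(bordered v w (fromBlocks A B C D)).det‖
      ≤ ‖v‖ * ‖w‖ * ‖LinearMap.toContinuousLinearMap (toEuclideanLin B)‖ :=
        norm_det_bordered_fromBlocks_le_mul v w hK
    _ ≤ _ := by
      simp only [mul_assoc]
      exact le_mul_of_one_le_left (by positivity) hsqrt_e
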